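/- arXiv:2211.04499 — 4 statements merged into one kernel-verified Lean document; each statement's English description precedes it below -/
import Mathlib

section
/- For any finite simple graph G with at least one edge, the fractional chromatic number of G satisfies χ_f(G) ≥ 1 + max{ s⁺(G)/s⁻(G), s⁻(G)/s⁺(G) }. -/
open Matrix Finset

namespace SpectralFrac

variable {V : Type*}

/-- The real adjacency matrix of a simple graph is Hermitian. -/
theorem adjMatrix_isHermitian [Fintype V] [DecidableEq V] (G : SimpleGraph V)
    [DecidableRel G.Adj] : (G.adjMatrix ℝ).IsHermitian := by
  rw [Matrix.IsHermitian, Matrix.conjTranspose_eq_transpose_of_trivial]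
  exact G.isSymm_adjMatrix

/-- `s⁺(G)`: the sum of the squares of the positive eigenvalues of the adjacency matrix. -/
noncomputable def sPos [Fintype V] [DecidableEq V] (G : SimpleGraph V) [DecidableRel G.Adj] : ℝ :=
  ∑ i, if 0 < (adjMatrix_isHermitian G).eigenvalues i
    then ((adjMatrix_isHermitian G).eigenvalues i) ^ 2 else 0

/-- `s⁻(G)`: the sum of the squares of the negative eigenvalues of the adjacency matrix. -/
noncomputable def sNeg [Fintype V] [DecidableEq V] (G : SimpleGraph V) [DecidableRel G.Adj] : ℝ :=
  ∑ i, if (adjMatrix_isHermitian G).eigenvalues i < 0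
    then ((adjMatrix_isHermitian G).eigenvalues i) ^ 2 else 0

/-- The largest eigenvalue of the adjacency matrix of `G`. -/
noncomputable def lamMax [Fintype V] [DecidableEq V] (G : SimpleGraph V) [DecidableRel G.Adj] : ℝ :=
  ⨆ i, (adjMatrix_isHermitian G).eigenvalues i

/-- The smallest eigenvalue of the adjacency matrix of `G`. -/
noncomputable def lamMin [Fintype V] [DecidableEq V] (G : SimpleGraph V) [DecidableRel G.Adj] : ℝ :=
  ⨅ i, (adjMatrix_isHermitian G).eigenvalues i

/-- A graph is edge-transitive if its automorphism group acts transitively on edges. -/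
def IsEdgeTransitive (H : SimpleGraph V) : Prop :=
  ∀ ⦃u v x y : V⦄, H.Adj u v → H.Adj x y → ∃ π : H ≃g H, s(π u, π v) = s(x, y)

/-- A graph is vertex-transitive if its automorphism group acts transitively on vertices. -/
def IsVertexTransitive (H : SimpleGraph V) : Prop :=
  ∀ u v : V, ∃ π : H ≃g H, π u = v

/-- The Kneser graph `K_{n;k}`: vertices are `k`-subsets of an `n`-set, adjacent iff disjoint. -/
def kneserGraph (n k : ℕ) : SimpleGraph {s : Finset (Fin n) // s.card = k} where
  Adj a b := a ≠ b ∧ Disjoint a.1 b.1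
  symm := ⟨fun a b h => ⟨h.1.symm, h.2.symm⟩⟩
  loopless := ⟨fun a h => h.1 rfl⟩

instance kneserGraph.adjDecidable (n k : ℕ) : DecidableRel (kneserGraph n k).Adj :=
  fun a b => inferInstanceAs (Decidable (a ≠ b ∧ Disjoint a.1 b.1))

/-- The fractional chromatic number: the infimum of `n / k` over all pairs `(n, k)` such that
`G` admits a homomorphism into the Kneser graph `K_{n;k}`. -/
noncomputable def fracChromaticNumber (G : SimpleGraph V) : ℝ :=
  sInf {q : ℝ | ∃ n k : ℕ, 0 < k ∧ Nonempty (G →g kneserGraph n k) ∧ q = (n : ℝ) / k}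

/-- The automorphism group of `H`, as a finset of permutations of the vertices. -/
def autSet [Fintype V] [DecidableEq V] (H : SimpleGraph V) [DecidableRel H.Adj] :
    Finset (Equiv.Perm V) :=
  Finset.univ.filter fun π => ∀ u v, H.Adj (π u) (π v) ↔ H.Adj u v

end SpectralFrac

/-!
A homomorphism `G → K_{n;k}` assigns to each vertex `u` a `k`-subset `S u` of `[n]`, with
`S u ∩ S v = ∅` along edges. The matrix `n |S u ∩ S v| - k²` is positive semidefinite: it is
`Bᵀ (n I - J) B` for the incidence matrix `B`, and `n I - J ⪰ 0` by Cauchy–Schwarz.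

Split the adjacency matrix as `A = P - N` into its positive and negative parts, so that in the
Frobenius pairing `‖P‖² = s⁺`, `‖N‖² = s⁻`, `⟨A, P⟩ = s⁺`, `⟨A, N⟩ = -s⁻` and `‖A‖² = s⁺ + s⁻`.
The Schur product theorem gives `k² ‖P‖² ≤ n ∑ |S u ∩ S v| P_uv²`. Off the edges `P = N`, and on
the edges the intersections are empty, so this sum is at most `k (s⁻ - σ)` with
`σ = ∑ A_uv N_uv²`, while Cauchy–Schwarz gives `(s⁻)² = ⟨A, N⟩² ≤ ‖A‖² σ`. Eliminating `σ` yields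
`k (s⁺ + s⁻) ≤ n s⁻`. Exchanging `P` and `N` gives the other ratio; the same bounds force
`s⁺, s⁻ > 0` as soon as `G` has an edge.
-/

open scoped MatrixOrder

namespace Matrix

variable {ι : Type*} [Fintype ι]

theorem IsSymm.sum_sum_mul_eq_trace_mul {X : Matrix ι ι ℝ} (hX : X.IsSymm) (Y : Matrix ι ι ℝ) :
    ∑ u, ∑ v, X u v * Y u v = (X * Y).trace := by
  simp only [trace, Matrix.diag, mul_apply]
  rw [Finset.sum_comm]
  exact sum_congr rfl fun u _ => sum_congr rfl fun v _ => by rw [hX.apply]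

theorem PosSemidef.sum_sum_mul_sq_nonneg {M X : Matrix ι ι ℝ} (hM : M.PosSemidef)
    (hX : X.PosSemidef) : 0 ≤ ∑ u, ∑ v, M u v * X u v ^ 2 := by
  simpa [dotProduct, mulVec, sq] using (hM.hadamard (hX.hadamard hX)).dotProduct_mulVec_nonneg 1

theorem sq_sum_sum_mul_le {W Y : Matrix ι ι ℝ} (hW : ∀ u v, 0 ≤ W u v) :
    (∑ u, ∑ v, W u v * Y u v) ^ 2 ≤ (∑ u, ∑ v, W u v) * ∑ u, ∑ v, W u v * Y u v ^ 2 := by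
  simpa only [Fintype.sum_prod_type] using
    sum_sq_le_sum_mul_sum_of_sq_le_mul univ (r := fun p : ι × ι => W p.1 p.2 * Y p.1 p.2)
      (f := fun p => W p.1 p.2) (g := fun p => W p.1 p.2 * Y p.1 p.2 ^ 2)
      (fun p _ => hW p.1 p.2) (fun p _ => mul_nonneg (hW p.1 p.2) (sq_nonneg _))
      (fun p _ => le_of_eq (by ring))

variable [DecidableEq ι]

theorem posSemidef_card_smul_one_sub_const_one :
    ((Fintype.card ι : ℝ) • (1 : Matrix ι ι ℝ) - of fun _ _ => 1).PosSemidef := by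
  refine .of_dotProduct_mulVec_nonneg (by ext; simp [one_apply, eq_comm]) fun x => ?_
  simpa [dotProduct, mulVec, sub_mul, mul_sub, one_apply, sum_sub_distrib, sq, mul_sum, sum_mul,
    mul_comm, mul_left_comm, mul_assoc] using sq_sum_le_card_mul_sum_sq (s := univ) (f := x)

theorem isSymm_posPart (A : Matrix ι ι ℝ) : (A⁺).IsSymm :=
  isHermitian_iff_isSymm.1 (CFC.posPart_nonneg A).posSemidef.isHermitian

theorem isSymm_negPart (A : Matrix ι ι ℝ) : (A⁻).IsSymm :=
  isHermitian_iff_isSymm.1 (CFC.negPart_nonneg A).posSemidef.isHermitian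

namespace IsHermitian

variable {A : Matrix ι ι ℝ} (hA : A.IsHermitian)
include hA

theorem trace_cfc (f : ℝ → ℝ) : (cfc f A).trace = ∑ i, f (hA.eigenvalues i) := by
  rw [hA.cfc_eq, IsHermitian.cfc, Unitary.conjStarAlgAut_apply, trace_mul_cycle,
    UnitaryGroup.star_mul_self, one_mul, trace_diagonal]
  simp

theorem trace_posPart_mul_self : (A⁺ * A⁺).trace = ∑ i, (hA.eigenvalues i)⁺ ^ 2 := by
  rw [CFC.posPart_def, cfcₙ_eq_cfc, ← cfc_mul .., hA.trace_cfc]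
  simp [sq]

theorem trace_negPart_mul_self : (A⁻ * A⁻).trace = ∑ i, (hA.eigenvalues i)⁻ ^ 2 := by
  rw [CFC.negPart_def, cfcₙ_eq_cfc, ← cfc_mul .., hA.trace_cfc]
  simp [sq]

theorem mul_posPart : A * A⁺ = A⁺ * A⁺ := by
  nth_rw 1 [← CFC.posPart_sub_negPart A hA]
  rw [sub_mul, CFC.negPart_mul_posPart, sub_zero]

theorem mul_negPart : A * A⁻ = -(A⁻ * A⁻) := by
  nth_rw 1 [← CFC.posPart_sub_negPart A hA]
  rw [sub_mul, CFC.posPart_mul_negPart, zero_sub]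

theorem sum_sum_posPart_sq : ∑ u, ∑ v, A⁺ u v ^ 2 = ∑ i, (hA.eigenvalues i)⁺ ^ 2 := by
  simp only [sq, (isSymm_posPart A).sum_sum_mul_eq_trace_mul, hA.trace_posPart_mul_self]

theorem sum_sum_negPart_sq : ∑ u, ∑ v, A⁻ u v ^ 2 = ∑ i, (hA.eigenvalues i)⁻ ^ 2 := by
  simp only [sq, (isSymm_negPart A).sum_sum_mul_eq_trace_mul, hA.trace_negPart_mul_self]

theorem sum_sum_mul_posPart : ∑ u, ∑ v, A u v * A⁺ u v = ∑ u, ∑ v, A⁺ u v ^ 2 := by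
  simp only [sq, (isHermitian_iff_isSymm.1 hA).sum_sum_mul_eq_trace_mul,
    (isSymm_posPart A).sum_sum_mul_eq_trace_mul, hA.mul_posPart]

theorem sum_sum_mul_negPart : ∑ u, ∑ v, A u v * A⁻ u v = -∑ u, ∑ v, A⁻ u v ^ 2 := by
  simp only [sq, (isHermitian_iff_isSymm.1 hA).sum_sum_mul_eq_trace_mul,
    (isSymm_negPart A).sum_sum_mul_eq_trace_mul, hA.mul_negPart, trace_neg]

theorem sum_sum_sq : ∑ u, ∑ v, A u v ^ 2 = ∑ u, ∑ v, A⁺ u v ^ 2 + ∑ u, ∑ v, A⁻ u v ^ 2 := by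
  have hsplit : A * A = A * A⁺ - A * A⁻ := by rw [← mul_sub, CFC.posPart_sub_negPart A hA]
  simp only [sq, (isHermitian_iff_isSymm.1 hA).sum_sum_mul_eq_trace_mul,
    (isSymm_posPart A).sum_sum_mul_eq_trace_mul, (isSymm_negPart A).sum_sum_mul_eq_trace_mul,
    hsplit, hA.mul_posPart, hA.mul_negPart, sub_neg_eq_add, trace_add]

end IsHermitian

end Matrix

namespace SpectralFrac

variable {V : Type*} [Fintype V]

theorem one_add_div_le_div {k n x y σ : ℝ} (hk : 0 < k) (hn : 0 ≤ n) (hx : 0 < x) (hy : 0 < y)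
    (hbound : k * x ≤ n * (y - σ)) (hCS : y ^ 2 ≤ (x + y) * σ) : 1 + x / y ≤ n / k := by
  have hxy : k * (x * (x + y)) ≤ n * (x * y) := by nlinarith
  have : k * (x + y) ≤ n * y := by nlinarith
  rw [one_add_div hy.ne', div_le_div_iff₀ hy hk]
  linarith

theorem posSemidef_mul_card_inter_sub_sq {n k : ℕ} (S : V → Finset (Fin n))
    (hS : ∀ u, #(S u) = k) :
    (of fun u v => (n : ℝ) * #(S u ∩ S v) - k ^ 2 : Matrix V V ℝ).PosSemidef := by
  let B : Matrix (Fin n) V ℝ := of fun α u => if α ∈ S u then 1 else 0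
  convert (posSemidef_card_smul_one_sub_const_one (ι := Fin n)).conjTranspose_mul_mul_same B
    using 1
  ext u v
  simp [B, mul_sub, mul_apply, sum_ite_mem, one_apply, hS, inter_comm, sq, mul_comm]

theorem nonempty_hom_kneserGraph_card_one (G : SimpleGraph V) :
    Nonempty (G →g kneserGraph (Fintype.card V) 1) :=
  ⟨{ toFun := fun u => ⟨{Fintype.equivFin V u}, card_singleton _⟩
     map_rel' := fun {u v} h => by
       have hne := (Fintype.equivFin V).injective.ne (G.ne_of_adj h)
       exact ⟨fun heq => hne (singleton_injective (congrArg Subtype.val heq)),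
         disjoint_singleton.2 hne⟩ }⟩

variable {G : SimpleGraph V} [DecidableRel G.Adj]

omit [Fintype V] in
theorem adjMatrix_nonneg (u v : V) : 0 ≤ G.adjMatrix ℝ u v := by
  by_cases h : G.Adj u v <;> simp [h]

theorem one_le_sum_sum_adjMatrix (hG : G.edgeSet.Nonempty) :
    1 ≤ ∑ u, ∑ v, G.adjMatrix ℝ u v := by
  obtain ⟨e, he⟩ := hG
  induction e using Sym2.ind with | _ u v => ?_
  calc (1 : ℝ) = G.adjMatrix ℝ u v := by simp [(G.mem_edgeSet).1 he]
    _ ≤ ∑ v', G.adjMatrix ℝ u v' := single_le_sum (fun v' _ => adjMatrix_nonneg u v') (mem_univ v)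
    _ ≤ ∑ u', ∑ v', G.adjMatrix ℝ u' v' :=
      single_le_sum (f := fun u' => ∑ v', G.adjMatrix ℝ u' v')
        (fun u' _ => sum_nonneg fun v' _ => adjMatrix_nonneg u' v') (mem_univ u)

section Hom

variable {n k : ℕ} (hk : 0 < k) (φ : G →g kneserGraph n k) {X Y : Matrix V V ℝ}
  (hX : X.PosSemidef) (hXY : ∀ u v, ¬G.Adj u v → X u v = Y u v)
include hk φ hX hXY

theorem card_mul_sum_sum_sq_le_of_hom :
    k * ∑ u, ∑ v, X u v ^ 2
      ≤ n * (∑ u, ∑ v, Y u v ^ 2 - ∑ u, ∑ v, G.adjMatrix ℝ u v * Y u v ^ 2) := by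
  set S : V → Finset (Fin n) := fun u => (φ u).1
  have hS : ∀ u, #(S u) = k := fun u => (φ u).2
  have hSchur := (posSemidef_mul_card_inter_sub_sq S hS).sum_sum_mul_sq_nonneg hX
  have hinter : ∀ u v, (#(S u ∩ S v) : ℝ) * X u v ^ 2
      ≤ k * ((1 - G.adjMatrix ℝ u v) * Y u v ^ 2) := by
    intro u v
    by_cases h : G.Adj u v
    · have hdisj : Disjoint (S u) (S v) := (φ.map_rel h).2
      simp [h, disjoint_iff_inter_eq_empty.1 hdisj]
    · rw [hXY u v h]
      simp only [G.adjMatrix_apply, h, if_false, sub_zero, one_mul]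
      gcongr
      exact_mod_cast (card_le_card inter_subset_left).trans (hS u).le
  have hk' : (0 : ℝ) < k := by exact_mod_cast hk
  refine le_of_mul_le_mul_left ?_ hk'
  calc (k : ℝ) * (k * ∑ u, ∑ v, X u v ^ 2) ≤ n * ∑ u, ∑ v, (#(S u ∩ S v) : ℝ) * X u v ^ 2 := by
        simp only [of_apply, sub_mul, sum_sub_distrib, ← mul_sum, mul_assoc] at hSchur
        rw [← mul_assoc, ← sq]
        linarith
    _ ≤ n * ∑ u, ∑ v, k * ((1 - G.adjMatrix ℝ u v) * Y u v ^ 2) := by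
        gcongr n * ?_
        exact sum_le_sum fun u _ => sum_le_sum fun v _ => hinter u v
    _ = k * (n * (∑ u, ∑ v, Y u v ^ 2 - ∑ u, ∑ v, G.adjMatrix ℝ u v * Y u v ^ 2)) := by
        simp only [← mul_sum, sub_mul, one_mul, sum_sub_distrib]
        ring

theorem sum_sum_sq_pos_of_hom (hsum : 0 < ∑ u, ∑ v, X u v ^ 2 + ∑ u, ∑ v, Y u v ^ 2) :
    0 < ∑ u, ∑ v, Y u v ^ 2 := by
  have hbound := card_mul_sum_sum_sq_le_of_hom hk φ hX hXY
  have hσ : 0 ≤ ∑ u, ∑ v, G.adjMatrix ℝ u v * Y u v ^ 2 :=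
    sum_nonneg fun u _ => sum_nonneg fun v _ => mul_nonneg (adjMatrix_nonneg u v) (sq_nonneg _)
  have hX0 : 0 ≤ ∑ u, ∑ v, X u v ^ 2 := sum_nonneg fun u _ => sum_nonneg fun v _ => sq_nonneg _
  have hk' : (0 : ℝ) < k := by exact_mod_cast hk
  have hn : (0 : ℝ) ≤ n := n.cast_nonneg
  nlinarith

theorem one_add_div_le_of_hom
    (hAY : (∑ u, ∑ v, G.adjMatrix ℝ u v * Y u v) ^ 2 = (∑ u, ∑ v, Y u v ^ 2) ^ 2)
    (hAsum : ∑ u, ∑ v, G.adjMatrix ℝ u v = ∑ u, ∑ v, X u v ^ 2 + ∑ u, ∑ v, Y u v ^ 2)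
    (hx : 0 < ∑ u, ∑ v, X u v ^ 2) (hy : 0 < ∑ u, ∑ v, Y u v ^ 2) :
    1 + (∑ u, ∑ v, X u v ^ 2) / ∑ u, ∑ v, Y u v ^ 2 ≤ n / k := by
  have hCS := sq_sum_sum_mul_le (Y := Y) (adjMatrix_nonneg (G := G))
  rw [hAY, hAsum] at hCS
  exact one_add_div_le_div (by exact_mod_cast hk) n.cast_nonneg hx hy
    (card_mul_sum_sum_sq_le_of_hom hk φ hX hXY) hCS

end Hom

variable [DecidableEq V]

variable (G) in
theorem sPos_eq_sum_sum_posPart_sq : sPos G = ∑ u, ∑ v, (G.adjMatrix ℝ)⁺ u v ^ 2 := by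
  rw [(adjMatrix_isHermitian G).sum_sum_posPart_sq]
  refine sum_congr rfl fun i _ => ?_
  split_ifs with h
  · rw [posPart_eq_self.2 h.le]
  · rw [posPart_eq_zero.2 (not_lt.1 h), sq, zero_mul]

variable (G) in
theorem sNeg_eq_sum_sum_negPart_sq : sNeg G = ∑ u, ∑ v, (G.adjMatrix ℝ)⁻ u v ^ 2 := by
  rw [(adjMatrix_isHermitian G).sum_sum_negPart_sq]
  refine sum_congr rfl fun i _ => ?_
  split_ifs with h
  · rw [negPart_eq_neg.2 h.le, neg_sq]
  · rw [negPart_eq_zero.2 (not_lt.1 h), sq, zero_mul]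

variable (G) in
theorem sum_sum_adjMatrix_eq_sPos_add_sNeg : ∑ u, ∑ v, G.adjMatrix ℝ u v = sPos G + sNeg G := by
  rw [sPos_eq_sum_sum_posPart_sq, sNeg_eq_sum_sum_negPart_sq,
    ← (adjMatrix_isHermitian G).sum_sum_sq]
  refine sum_congr rfl fun u _ => sum_congr rfl fun v _ => ?_
  by_cases h : G.Adj u v <;> simp [h]

theorem posPart_adjMatrix_apply_eq_negPart {u v : V} (h : ¬G.Adj u v) :
    (G.adjMatrix ℝ)⁺ u v = (G.adjMatrix ℝ)⁻ u v := by
  have hsub := CFC.posPart_sub_negPart (G.adjMatrix ℝ) (adjMatrix_isHermitian G)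
  have := congrFun (congrFun hsub u) v
  rw [Matrix.sub_apply, G.adjMatrix_apply, if_neg h] at this
  linarith

theorem one_add_max_le_of_hom (hG : G.edgeSet.Nonempty) {n k : ℕ} (hk : 0 < k)
    (φ : G →g kneserGraph n k) :
    1 + max (sPos G / sNeg G) (sNeg G / sPos G) ≤ n / k := by
  have hA := adjMatrix_isHermitian G
  have hP := (CFC.posPart_nonneg (G.adjMatrix ℝ)).posSemidef
  have hN := (CFC.negPart_nonneg (G.adjMatrix ℝ)).posSemidef
  have hPN : ∀ u v, ¬G.Adj u v → (G.adjMatrix ℝ)⁺ u v = (G.adjMatrix ℝ)⁻ u v :=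
    fun _ _ => posPart_adjMatrix_apply_eq_negPart
  have hNP : ∀ u v, ¬G.Adj u v → (G.adjMatrix ℝ)⁻ u v = (G.adjMatrix ℝ)⁺ u v :=
    fun u v h => (hPN u v h).symm
  have hsum := sum_sum_adjMatrix_eq_sPos_add_sNeg G
  have hsum_pos : 0 < sPos G + sNeg G := hsum ▸ one_pos.trans_le (one_le_sum_sum_adjMatrix hG)
  rw [sPos_eq_sum_sum_posPart_sq, sNeg_eq_sum_sum_negPart_sq] at hsum hsum_pos ⊢
  have hsPos := sum_sum_sq_pos_of_hom hk φ hN hNP (by rwa [add_comm])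
  have hsNeg := sum_sum_sq_pos_of_hom hk φ hP hPN hsum_pos
  rw [add_max]
  exact max_le
    (one_add_div_le_of_hom hk φ hP hPN (by rw [hA.sum_sum_mul_negPart, neg_sq]) hsum hsPos hsNeg)
    (one_add_div_le_of_hom hk φ hN hNP (by rw [hA.sum_sum_mul_posPart]) (by rw [hsum, add_comm])
      hsNeg hsPos)

end SpectralFrac

/-- **Theorem (main).** For any finite simple graph `G` with at least one edge, the fractional
chromatic number satisfies `χ_f(G) ≥ 1 + max { s⁺(G)/s⁻(G), s⁻(G)/s⁺(G) }`. -/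
theorem SpectralFrac.fracChromaticNumber_ge_one_add_max {V : Type*} [Fintype V] [DecidableEq V]
    (G : SimpleGraph V) [DecidableRel G.Adj] (hG : G.edgeSet.Nonempty) :
    1 + max (sPos G / sNeg G) (sNeg G / sPos G) ≤ fracChromaticNumber G := by
  refine le_csInf ⟨_, Fintype.card V, 1, one_pos, nonempty_hom_kneserGraph_card_one G, rfl⟩ ?_
  rintro _ ⟨n, k, hk, ⟨φ⟩, rfl⟩
  exact one_add_max_le_of_hom hG hk φ
end

section
/- For any finite simple graph G with at least one edge, the chromatic number of G satisfies χ(G) ≥ 1 + max{ s⁺(G)/s⁻(G), s⁻(G)/s⁺(G) }. -/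
/-!
Write the adjacency matrix as `A = A⁺ - A⁻` with `A± = cfc (·±) A`: both parts are Gram
matrices, they are orthogonal for the Frobenius inner product, and `‖A⁺‖² = s⁺`, `‖A⁻‖² = s⁻`.
A proper colouring with `k` colours makes `A` vanish on the blocks between vertices of equal
colour, so `A⁺` and `A⁻` agree there; let `d` be the squared norm of this common part.
For a Gram matrix `B = WᵀW` and the diagonal projections `Pᵢ` onto the colour classes, the
block `Bᵢⱼ = (W Pᵢ)ᵀ (W Pⱼ)` satisfies `‖Bᵢⱼ‖² = ⟨W Pᵢ Wᵀ, W Pⱼ Wᵀ⟩ ≤ ‖Bᵢᵢ‖ ‖Bⱼⱼ‖`, whence the pinching bound `‖B‖² ≤ k d`, i.e. the cross-colour part of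
`A⁺` has squared norm at most `(k - 1) d`. Orthogonality says the cross-colour parts of `A⁺`
and `A⁻` have inner product `-d`, so Cauchy–Schwarz gives `d ≤ (k - 1)` times the squared norm
of the cross-colour part of `A⁻`, and together `s⁺ ≤ (k - 1) s⁻`. By symmetry also
`s⁻ ≤ (k - 1) s⁺`.
-/

open Matrix Finset

namespace SpectralFrac

section Frobenius

variable {l m n : Type*} [Fintype l] [Fintype m] [Fintype n]

def frobInner (M N : Matrix m n ℝ) : ℝ := ∑ u, ∑ v, M u v * N u v

lemma frobInner_self_nonneg (M : Matrix m n ℝ) : 0 ≤ frobInner M M :=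
  sum_nonneg fun _ _ => sum_nonneg fun _ _ => mul_self_nonneg _

lemma mul_self_apply_le_frobInner (M : Matrix m n ℝ) (u : m) (v : n) :
    M u v * M u v ≤ frobInner M M :=
  (single_le_sum (fun _ _ => mul_self_nonneg _) (mem_univ v)).trans
    (single_le_sum (f := fun u => ∑ v, M u v * M u v)
      (fun _ _ => sum_nonneg fun _ _ => mul_self_nonneg _) (mem_univ u))

lemma frobInner_eq_trace (M N : Matrix m n ℝ) : frobInner M N = trace (M * Nᵀ) := by
  simp [frobInner, trace, mul_apply]

lemma frobInner_sq_le (M N : Matrix m n ℝ) :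
    frobInner M N ^ 2 ≤ frobInner M M * frobInner N N := by
  simpa [frobInner, Fintype.sum_prod_type, pow_two] using
    sum_mul_sq_le_sq_mul_sq univ (fun p : m × n => M p.1 p.2) (fun p => N p.1 p.2)

lemma frobInner_le_sqrt_mul_sqrt (M N : Matrix m n ℝ) :
    frobInner M N ≤ √(frobInner M M) * √(frobInner N N) := by
  rw [← Real.sqrt_mul (frobInner_self_nonneg M)]
  exact Real.le_sqrt_of_sq_le (frobInner_sq_le M N)

lemma frobInner_transpose_mul (X : Matrix l m ℝ) (Y : Matrix l n ℝ) :
    frobInner (Xᵀ * Y) (Xᵀ * Y) = frobInner (X * Xᵀ) (Y * Yᵀ) := by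
  simp only [frobInner_eq_trace, transpose_mul, transpose_transpose, ← Matrix.mul_assoc]
  rw [trace_mul_cycle, ← Matrix.mul_assoc X]

lemma frobInner_transpose_mul_le (X : Matrix l m ℝ) (Y : Matrix l n ℝ) :
    frobInner (Xᵀ * Y) (Xᵀ * Y) ≤
      √(frobInner (Xᵀ * X) (Xᵀ * X)) * √(frobInner (Yᵀ * Y) (Yᵀ * Y)) := by
  simpa only [frobInner_transpose_mul] using frobInner_le_sqrt_mul_sqrt (X * Xᵀ) (Y * Yᵀ)

end Frobenius

section ColorClasses

variable {l n ι : Type*} [DecidableEq ι] (c : n → ι)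

def sameColorPart (M : Matrix n n ℝ) : Matrix n n ℝ := of fun u v => if c u = c v then M u v else 0

def crossColorPart (M : Matrix n n ℝ) : Matrix n n ℝ := of fun u v => if c u = c v then 0 else M u v

lemma sameColorPart_sub (M N : Matrix n n ℝ) :
    sameColorPart c (M - N) = sameColorPart c M - sameColorPart c N := by
  ext u v
  simp only [sameColorPart, of_apply, Matrix.sub_apply]
  split_ifs <;> simp

variable [Fintype n]

lemma frobInner_eq_sameColorPart_add_crossColorPart (M N : Matrix n n ℝ) :
    frobInner M N = frobInner (sameColorPart c M) (sameColorPart c N) +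
      frobInner (crossColorPart c M) (crossColorPart c N) := by
  simp only [frobInner, ← sum_add_distrib]
  refine sum_congr rfl fun u _ => sum_congr rfl fun v _ => ?_
  simp only [sameColorPart, crossColorPart, of_apply]
  split_ifs <;> ring

variable [Fintype l] [DecidableEq n]

def colorProj (i : ι) : Matrix n n ℝ := diagonal fun v => if c v = i then 1 else 0

lemma colorProj_mul_mul_colorProj_apply (B : Matrix n n ℝ) (i j : ι) (u v : n) :
    (colorProj c i * B * colorProj c j) u v = if c u = i ∧ c v = j then B u v else 0 := by
  simp only [colorProj, diagonal_mul, mul_diagonal]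
  split_ifs <;> simp_all

lemma transpose_mul_colorProj (W : Matrix l n ℝ) (i j : ι) :
    (W * colorProj c i)ᵀ * (W * colorProj c j) = colorProj c i * (Wᵀ * W) * colorProj c j := by
  simp only [transpose_mul, colorProj, diagonal_transpose, Matrix.mul_assoc]

lemma sum_frobInner_colorBlocks [Fintype ι] (B : Matrix n n ℝ) :
    ∑ i, ∑ j, frobInner (colorProj c i * B * colorProj c j) (colorProj c i * B * colorProj c j) =
      frobInner B B := by
  simp only [frobInner, colorProj_mul_mul_colorProj_apply]
  conv_lhs => enter [2, i]; rw [sum_comm]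
  rw [sum_comm]
  refine sum_congr rfl fun u _ => ?_
  conv_lhs => enter [2, i]; rw [sum_comm]
  rw [sum_comm]
  simp [ite_and]

lemma sum_frobInner_diag_colorBlocks [Fintype ι] (B : Matrix n n ℝ) :
    ∑ i, frobInner (colorProj c i * B * colorProj c i) (colorProj c i * B * colorProj c i) =
      frobInner (sameColorPart c B) (sameColorPart c B) := by
  simp only [frobInner, colorProj_mul_mul_colorProj_apply, sameColorPart, of_apply]
  rw [sum_comm]
  refine sum_congr rfl fun u _ => ?_
  rw [sum_comm]
  simp [ite_and, eq_comm]

theorem frobInner_transpose_mul_self_le_card_mul_sameColorPart [Fintype ι] (W : Matrix l n ℝ) :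
    frobInner (Wᵀ * W) (Wᵀ * W) ≤
      Fintype.card ι * frobInner (sameColorPart c (Wᵀ * W)) (sameColorPart c (Wᵀ * W)) := by
  set B := Wᵀ * W
  set s : ι → ℝ := fun i =>
    √(frobInner (colorProj c i * B * colorProj c i) (colorProj c i * B * colorProj c i))
  calc frobInner B B
      = ∑ i, ∑ j,
          frobInner (colorProj c i * B * colorProj c j) (colorProj c i * B * colorProj c j) :=
        (sum_frobInner_colorBlocks c B).symm
    _ ≤ ∑ i, ∑ j, s i * s j := by
        gcongr with i _ j _
        simpa only [transpose_mul_colorProj] using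
          frobInner_transpose_mul_le (W * colorProj c i) (W * colorProj c j)
    _ = (∑ i, s i) ^ 2 := by rw [sq, sum_mul_sum]
    _ ≤ Fintype.card ι * ∑ i, s i ^ 2 := by
        simpa using sq_sum_le_card_mul_sum_sq (s := univ) (f := s)
    _ = _ := by
        simp only [s, Real.sq_sqrt (frobInner_self_nonneg _), sum_frobInner_diag_colorBlocks]

lemma add_le_sub_one_mul_add {k d x y : ℝ} (hk : 1 ≤ k) (hd : 0 ≤ d) (hy : 0 ≤ y)
    (hdxy : d ^ 2 ≤ x * y) (hx : d + x ≤ k * d) : d + x ≤ (k - 1) * (d + y) := by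
  have hdy : d ≤ (k - 1) * y := by
    rcases hd.eq_or_lt with rfl | hd
    · positivity
    · refine le_of_mul_le_mul_left ?_ hd
      nlinarith
  linarith

theorem frobInner_transpose_mul_self_le_of_sameColorPart_eq [Fintype ι] [Nonempty ι]
    (W : Matrix l n ℝ) (C : Matrix n n ℝ) (hsame : sameColorPart c (Wᵀ * W) = sameColorPart c C)
    (horth : frobInner (Wᵀ * W) C = 0) :
    frobInner (Wᵀ * W) (Wᵀ * W) ≤ (Fintype.card ι - 1) * frobInner C C := by
  have hk : (1 : ℝ) ≤ Fintype.card ι := by exact_mod_cast Fintype.card_pos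
  have hpinch := frobInner_transpose_mul_self_le_card_mul_sameColorPart c W
  have hB := frobInner_eq_sameColorPart_add_crossColorPart c (Wᵀ * W) (Wᵀ * W)
  have hC := frobInner_eq_sameColorPart_add_crossColorPart c C C
  have hBC := frobInner_eq_sameColorPart_add_crossColorPart c (Wᵀ * W) C
  rw [hsame] at hpinch hB hBC
  have hcs := frobInner_sq_le (crossColorPart c (Wᵀ * W)) (crossColorPart c C)
  rw [show frobInner (crossColorPart c (Wᵀ * W)) (crossColorPart c C) =
    -frobInner (sameColorPart c C) (sameColorPart c C) by linarith, neg_sq] at hcs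
  rw [hB, hC]
  exact add_le_sub_one_mul_add hk (frobInner_self_nonneg _) (frobInner_self_nonneg _) hcs
    (hB ▸ hpinch)

end ColorClasses

section Spectral

variable {n ι : Type*} [Fintype n] [DecidableEq n] {A : Matrix n n ℝ}

lemma transpose_cfc (f : ℝ → ℝ) (A : Matrix n n ℝ) : (cfc f A)ᵀ = cfc f A := by
  rw [← conjTranspose_eq_transpose_of_trivial]
  exact cfc_predicate f A

lemma trace_cfc (hA : A.IsHermitian) (f : ℝ → ℝ) :
    trace (cfc f A) = ∑ i, f (hA.eigenvalues i) := by
  rw [hA.cfc_eq, IsHermitian.cfc, Unitary.conjStarAlgAut_apply, trace_mul_cycle,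
    Unitary.coe_star_mul_self, one_mul, trace_diagonal]
  rfl

lemma frobInner_cfc_cfc (hA : A.IsHermitian) (f g : ℝ → ℝ) :
    frobInner (cfc f A) (cfc g A) = ∑ i, f (hA.eigenvalues i) * g (hA.eigenvalues i) := by
  have hfin := A.finite_real_spectrum
  rw [frobInner_eq_trace, transpose_cfc,
    ← cfc_mul f g A (hfin.continuousOn _) (hfin.continuousOn _), trace_cfc hA]

lemma cfc_eq_transpose_mul_self {f : ℝ → ℝ} (hf : ∀ x, 0 ≤ f x) (A : Matrix n n ℝ) :
    cfc f A = (cfc (fun x => √(f x)) A)ᵀ * cfc (fun x => √(f x)) A := by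
  have hfin := A.finite_real_spectrum
  rw [transpose_cfc, ← cfc_mul _ _ A (hfin.continuousOn _) (hfin.continuousOn _)]
  simp only [Real.mul_self_sqrt (hf _)]

theorem frobInner_cfc_self_le [Fintype ι] [Nonempty ι] [DecidableEq ι] (c : n → ι)
    (hA : A.IsHermitian) {f g : ℝ → ℝ} (hf : ∀ x, 0 ≤ f x) (hfg : ∀ x, f x * g x = 0)
    (hsame : sameColorPart c (cfc f A) = sameColorPart c (cfc g A)) :
    frobInner (cfc f A) (cfc f A) ≤ (Fintype.card ι - 1) * frobInner (cfc g A) (cfc g A) := by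
  have horth : frobInner (cfc f A) (cfc g A) = 0 := by simp [frobInner_cfc_cfc hA, hfg]
  rw [cfc_eq_transpose_mul_self hf] at hsame horth ⊢
  exact frobInner_transpose_mul_self_le_of_sameColorPart_eq c _ _ hsame horth

theorem sameColorPart_cfc_posPart_eq [DecidableEq ι] (c : n → ι) (hA : A.IsHermitian)
    (hc : sameColorPart c A = 0) :
    sameColorPart c (cfc (·⁺ : ℝ → ℝ) A) = sameColorPart c (cfc (·⁻ : ℝ → ℝ) A) := by
  rw [← sub_eq_zero, ← sameColorPart_sub, ← cfc_sub _ _ A]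
  simpa only [posPart_sub_negPart, cfc_id' ℝ A] using hc

end Spectral

lemma posPart_mul_negPart (x : ℝ) : x⁺ * x⁻ = 0 := by
  rcases le_total x 0 with h | h
  · rw [posPart_eq_zero.2 h, zero_mul]
  · rw [negPart_eq_zero.2 h, mul_zero]

lemma one_add_max_div_le {a b k : ℝ} (ha : 0 ≤ a) (hb : 0 ≤ b) (hpos : 0 < a + b)
    (hab : a ≤ (k - 1) * b) (hba : b ≤ (k - 1) * a) : 1 + max (a / b) (b / a) ≤ k := by
  have hb' : 0 < b := by
    by_contra! h
    nlinarith [le_antisymm h hb]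
  have ha' : 0 < a := by
    by_contra! h
    nlinarith [le_antisymm h ha]
  rw [← le_sub_iff_add_le', max_le_iff, div_le_iff₀ hb', div_le_iff₀ ha']
  exact ⟨hab, hba⟩

section Graph

variable {V ι : Type*} {G : SimpleGraph V} [DecidableRel G.Adj]

lemma sameColorPart_adjMatrix [DecidableEq ι] (C : G.Coloring ι) :
    sameColorPart C (G.adjMatrix ℝ) = 0 := by
  ext u v
  simp only [sameColorPart, of_apply, Matrix.zero_apply, ite_eq_right_iff]
  intro h
  simpa [SimpleGraph.adjMatrix_apply] using fun hadj => C.valid hadj h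

variable [Fintype V] [DecidableEq V]

lemma sPos_eq_frobInner :
    sPos G = frobInner (cfc (·⁺ : ℝ → ℝ) (G.adjMatrix ℝ)) (cfc (·⁺ : ℝ → ℝ) (G.adjMatrix ℝ)) := by
  rw [frobInner_cfc_cfc (adjMatrix_isHermitian G), sPos]
  refine sum_congr rfl fun i _ => ?_
  split_ifs with h
  · rw [posPart_eq_self.2 h.le, sq]
  · rw [posPart_eq_zero.2 (not_lt.1 h), mul_zero]

lemma sNeg_eq_frobInner :
    sNeg G = frobInner (cfc (·⁻ : ℝ → ℝ) (G.adjMatrix ℝ)) (cfc (·⁻ : ℝ → ℝ) (G.adjMatrix ℝ)) := by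
  rw [frobInner_cfc_cfc (adjMatrix_isHermitian G), sNeg]
  refine sum_congr rfl fun i _ => ?_
  split_ifs with h
  · rw [negPart_eq_neg.2 h.le, neg_mul_neg, sq]
  · rw [negPart_eq_zero.2 (not_lt.1 h), mul_zero]

lemma sPos_nonneg : 0 ≤ sPos G := by
  rw [sPos_eq_frobInner]
  exact frobInner_self_nonneg _

lemma sNeg_nonneg : 0 ≤ sNeg G := by
  rw [sNeg_eq_frobInner]
  exact frobInner_self_nonneg _

lemma sPos_le_mul_sNeg [Fintype ι] [Nonempty ι] [DecidableEq ι] (C : G.Coloring ι) :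
    sPos G ≤ (Fintype.card ι - 1) * sNeg G := by
  rw [sPos_eq_frobInner, sNeg_eq_frobInner]
  exact frobInner_cfc_self_le C (adjMatrix_isHermitian G) (fun _ => posPart_nonneg _)
    posPart_mul_negPart
    (sameColorPart_cfc_posPart_eq C (adjMatrix_isHermitian G) (sameColorPart_adjMatrix C))

lemma sNeg_le_mul_sPos [Fintype ι] [Nonempty ι] [DecidableEq ι] (C : G.Coloring ι) :
    sNeg G ≤ (Fintype.card ι - 1) * sPos G := by
  rw [sPos_eq_frobInner, sNeg_eq_frobInner]
  exact frobInner_cfc_self_le C (adjMatrix_isHermitian G) (fun _ => negPart_nonneg _)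
    (fun x => by rw [mul_comm, posPart_mul_negPart])
    (sameColorPart_cfc_posPart_eq C (adjMatrix_isHermitian G) (sameColorPart_adjMatrix C)).symm

lemma sPos_add_sNeg_eq_frobInner :
    sPos G + sNeg G = frobInner (G.adjMatrix ℝ) (G.adjMatrix ℝ) := by
  conv_rhs => rw [← cfc_id' ℝ (G.adjMatrix ℝ) (adjMatrix_isHermitian G).isSelfAdjoint]
  rw [frobInner_cfc_cfc (adjMatrix_isHermitian G), sPos, sNeg, ← sum_add_distrib]
  refine sum_congr rfl fun i _ => ?_
  split_ifs <;> nlinarith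

lemma sPos_add_sNeg_pos {u v : V} (huv : G.Adj u v) : 0 < sPos G + sNeg G := by
  rw [sPos_add_sNeg_eq_frobInner]
  exact lt_of_lt_of_le (by simp [huv]) (mul_self_apply_le_frobInner (G.adjMatrix ℝ) u v)

end Graph

end SpectralFrac

/-- **Theorem (Ando–Lin).** For any finite simple graph `G` with at least one edge,
`χ(G) ≥ 1 + max { s⁺(G)/s⁻(G), s⁻(G)/s⁺(G) }`. -/
theorem SpectralFrac.chromaticNumber_ge_one_add_max {V : Type*} [Fintype V] [DecidableEq V]
    (G : SimpleGraph V) [DecidableRel G.Adj] (hG : G.edgeSet.Nonempty) :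
    1 + max (sPos G / sNeg G) (sNeg G / sPos G) ≤ (G.chromaticNumber.toNat : ℝ) := by
  obtain ⟨u, v, huv⟩ := G.ne_bot_iff_exists_adj.1 (SimpleGraph.edgeSet_nonempty.1 hG)
  obtain ⟨C⟩ := G.colorable_chromaticNumber_of_fintype
  have : Nonempty (Fin G.chromaticNumber.toNat) := ⟨C u⟩
  simpa using one_add_max_div_le sPos_nonneg sNeg_nonneg (sPos_add_sNeg_pos huv)
    (sPos_le_mul_sNeg C) (sNeg_le_mul_sPos C)
end

section
/- Let H be a finite simple graph, with at least one edge, that is both vertex-transitive and edge-transitive, let G be a finite simple graph equipped with an H-partition ⨆_{u ∈ V(H)} V_u, and let X be a real symmetric positive semidefinite matrix with rows and columns indexed by V(G). Then ‖X‖² ≤ (1 + λ_max(H)/|λ_min(H)|) · Σ_{(u,v) : u,v ∈ V(H), {u,v} ∉ E(H)} ‖X_[u,v]‖², where the sum runs over all ordered pairs (u,v) of vertices of H (including u = v) that do not form an edge of H. -/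
open Matrix Finset

/-!
Let `w` be a unit `λ_min`-eigenvector of the adjacency matrix `A` of `H` and average `w wᵀ` over
`Aut H`: `E = ∑_π (w ∘ π)(w ∘ π)ᵀ`. Vertex-transitivity makes the diagonal of `E` constant, equal to
`α = |Aut H| / n`; edge-transitivity makes `E` constant on edges, equal to `β`, and
`2 |E(H)| β = ⟨A, E⟩ = |Aut H| λ_min`; Cauchy–Schwarz gives `E ≤ α` entrywise. The matrix `Q` of
squared block norms `‖X_[u,v]‖²` is entrywise nonnegative and, by the Schur product theorem,
positive semidefinite, so `0 ≤ ⟨E, Q⟩ ≤ β Q_edge + α Q_nonedge`. With `2 |E(H)| / n ≤ λ_max` this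
gives `|λ_min| Q_edge ≤ λ_max Q_nonedge`.
-/

namespace Matrix.IsHermitian

variable {n : Type*} [Fintype n] [DecidableEq n] {A : Matrix n n ℝ}

theorem posSemidef_sub_algebraMap (hA : A.IsHermitian) {c : ℝ} (hc : ∀ i, c ≤ hA.eigenvalues i) :
    (A - algebraMap ℝ _ c).PosSemidef := by
  refine posSemidef_iff_isHermitian_and_spectrum_nonneg.mpr
    ⟨hA.sub (isHermitian_diagonal _), ?_⟩
  rw [← spectrum.sub_singleton_eq, hA.spectrum_real_eq_range_eigenvalues]
  rintro _ ⟨_, ⟨i, rfl⟩, _, rfl, rfl⟩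
  exact sub_nonneg.mpr (hc i)

theorem posSemidef_algebraMap_sub (hA : A.IsHermitian) {c : ℝ} (hc : ∀ i, hA.eigenvalues i ≤ c) :
    (algebraMap ℝ _ c - A).PosSemidef := by
  refine posSemidef_iff_isHermitian_and_spectrum_nonneg.mpr
    ⟨(isHermitian_diagonal _).sub hA, ?_⟩
  rw [← spectrum.singleton_sub_eq, hA.spectrum_real_eq_range_eigenvalues]
  rintro _ ⟨_, rfl, _, ⟨i, rfl⟩, rfl⟩
  exact sub_nonneg.mpr (hc i)

theorem iInf_eigenvalues_mul_le (hA : A.IsHermitian) (x : n → ℝ) :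
    (⨅ i, hA.eigenvalues i) * (x ⬝ᵥ x) ≤ x ⬝ᵥ A *ᵥ x := by
  have := (hA.posSemidef_sub_algebraMap fun i ↦
    ciInf_le (Set.finite_range _).bddBelow i).dotProduct_mulVec_nonneg x
  simpa [sub_mulVec, Algebra.algebraMap_eq_smul_one, smul_mulVec] using this

theorem le_iSup_eigenvalues_mul (hA : A.IsHermitian) (x : n → ℝ) :
    x ⬝ᵥ A *ᵥ x ≤ (⨆ i, hA.eigenvalues i) * (x ⬝ᵥ x) := by
  have := (hA.posSemidef_algebraMap_sub fun i ↦
    le_ciSup (Set.finite_range _).bddAbove i).dotProduct_mulVec_nonneg x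
  simpa [sub_mulVec, Algebra.algebraMap_eq_smul_one, smul_mulVec] using this

theorem exists_dotProduct_mulVec_eq_iInf_eigenvalues [Nonempty n] (hA : A.IsHermitian) :
    ∃ w : n → ℝ, w ⬝ᵥ w = 1 ∧ w ⬝ᵥ A *ᵥ w = ⨅ i, hA.eigenvalues i := by
  obtain ⟨i, hi⟩ := Finite.exists_min hA.eigenvalues
  refine ⟨hA.eigenvectorBasis i, ?_, ?_⟩
  · have := real_inner_self_eq_norm_sq (hA.eigenvectorBasis i)
    rw [hA.eigenvectorBasis.orthonormal.1 i, EuclideanSpace.inner_eq_star_dotProduct] at this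
    simpa [dotProduct_comm] using this
  · rw [le_antisymm (ciInf_le (Set.finite_range _).bddBelow i) (le_ciInf hi), hA.eigenvalues_eq i]
    simp

end Matrix.IsHermitian

namespace SpectralFrac

section AdjacencySpectrum

variable {W : Type*} [Fintype W] [DecidableEq W] (H : SimpleGraph W) [DecidableRel H.Adj]

theorem sum_adjMatrix_le_lamMax_mul_card :
    ∑ u, ∑ v, H.adjMatrix ℝ u v ≤ lamMax H * Fintype.card W := by
  simpa [lamMax, dotProduct, mulVec] using (adjMatrix_isHermitian H).le_iSup_eigenvalues_mul 1

theorem lamMin_le_neg_one {u v : W} (h : H.Adj u v) : lamMin H ≤ -1 := by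
  set x : W → ℝ := Pi.single u 1 - Pi.single v 1
  have hx : x ⬝ᵥ x = 2 := by
    simp [x, dotProduct_sub, h.ne, h.ne', one_add_one_eq_two]
  have hAx : x ⬝ᵥ H.adjMatrix ℝ *ᵥ x = -2 := by
    norm_num [x, sub_dotProduct, dotProduct_sub, mulVec_sub, h, h.symm]
  have := (adjMatrix_isHermitian H).iInf_eigenvalues_mul_le x
  rw [hx, hAx] at this
  rw [lamMin]
  linarith

end AdjacencySpectrum

section OrbitGram

variable {W : Type*}

def orbitGram (S : Finset (Equiv.Perm W)) (w : W → ℝ) : Matrix W W ℝ :=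
  of fun u v ↦ ∑ π ∈ S, w (π u) * w (π v)

variable (S : Finset (Equiv.Perm W)) (w : W → ℝ)

theorem orbitGram_apply_comm (u v : W) : orbitGram S w u v = orbitGram S w v u :=
  sum_congr rfl fun _ _ ↦ mul_comm _ _

theorem orbitGram_apply_sq_le (u v : W) :
    orbitGram S w u v ^ 2 ≤ orbitGram S w u u * orbitGram S w v v := by
  simpa [orbitGram, sq] using sum_mul_sq_le_sq_mul_sq S (fun π ↦ w (π u)) (fun π ↦ w (π v))

theorem orbitGram_apply_self_nonneg (u : W) : 0 ≤ orbitGram S w u u :=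
  sum_nonneg fun _ _ ↦ mul_self_nonneg _

variable [Fintype W]

theorem trace_orbitGram : (orbitGram S w).trace = #S * (w ⬝ᵥ w) := by
  simp only [trace, Matrix.diag, orbitGram, of_apply]
  rw [sum_comm, ← nsmul_eq_mul, ← sum_const]
  exact sum_congr rfl fun π _ ↦ Equiv.sum_comp π fun u ↦ w u * w u

theorem sum_mul_orbitGram (M : Matrix W W ℝ) :
    ∑ u, ∑ v, M u v * orbitGram S w u v = ∑ π ∈ S, (w ∘ π) ⬝ᵥ M *ᵥ (w ∘ π) := by
  simp only [orbitGram, of_apply, dotProduct, mulVec, mul_sum, Function.comp_apply]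
  simp_rw [sum_comm (s := (univ : Finset W)) (t := S)]
  exact sum_congr rfl fun π _ ↦ sum_congr rfl fun u _ ↦ sum_congr rfl fun v _ ↦ by ring

theorem sum_mul_orbitGram_of_invariant (M : Matrix W W ℝ)
    (hM : ∀ π ∈ S, M.submatrix π π = M) :
    ∑ u, ∑ v, M u v * orbitGram S w u v = #S * (w ⬝ᵥ M *ᵥ w) := by
  rw [sum_mul_orbitGram, ← nsmul_eq_mul, ← sum_const]
  refine sum_congr rfl fun π hπ ↦ ?_
  conv_lhs => rw [← hM π hπ]
  rw [submatrix_mulVec_equiv, Function.comp_assoc, Equiv.self_comp_symm, Function.comp_id,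
    comp_equiv_dotProduct_comp_equiv]

theorem sum_mul_orbitGram_nonneg {Q : Matrix W W ℝ} (hQ : Q.PosSemidef) :
    0 ≤ ∑ u, ∑ v, Q u v * orbitGram S w u v := by
  rw [sum_mul_orbitGram]
  exact sum_nonneg fun π _ ↦ hQ.dotProduct_mulVec_nonneg (w ∘ π)

end OrbitGram

section Automorphisms

variable {W : Type*} [Fintype W] [DecidableEq W] {H : SimpleGraph W} [DecidableRel H.Adj]

theorem mem_autSet {π : Equiv.Perm W} : π ∈ autSet H ↔ ∀ u v, H.Adj (π u) (π v) ↔ H.Adj u v := by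
  simp [autSet]

theorem one_mem_autSet : 1 ∈ autSet H := mem_autSet.mpr fun _ _ ↦ Iff.rfl

theorem mul_mem_autSet_iff (σ : H ≃g H) {π : Equiv.Perm W} :
    π * σ.toEquiv ∈ autSet H ↔ π ∈ autSet H := by
  simp only [mem_autSet, Equiv.Perm.coe_mul, Function.comp_apply]
  refine ⟨fun h u v ↦ ?_, fun h u v ↦ (h _ _).trans σ.map_adj_iff⟩
  simpa using (h (σ.symm u) (σ.symm v)).trans σ.symm.map_adj_iff

theorem adjMatrix_submatrix_of_mem_autSet {π : Equiv.Perm W} (hπ : π ∈ autSet H) :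
    (H.adjMatrix ℝ).submatrix π π = H.adjMatrix ℝ := by
  ext u v
  simp [mem_autSet.mp hπ u v]

variable (w : W → ℝ)

theorem orbitGram_autSet_apply_iso (σ : H ≃g H) (u v : W) :
    orbitGram (autSet H) w (σ u) (σ v) = orbitGram (autSet H) w u v :=
  sum_equiv (Equiv.mulRight σ.toEquiv) (fun _ ↦ (mul_mem_autSet_iff σ).symm) fun _ _ ↦ rfl

theorem orbitGram_autSet_apply_self_eq (hvt : IsVertexTransitive H) (u v : W) :
    orbitGram (autSet H) w u u = orbitGram (autSet H) w v v := by
  obtain ⟨σ, rfl⟩ := hvt v u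
  exact orbitGram_autSet_apply_iso w σ v v

theorem orbitGram_autSet_apply_eq_of_adj (het : IsEdgeTransitive H) {u v x y : W}
    (huv : H.Adj u v) (hxy : H.Adj x y) :
    orbitGram (autSet H) w u v = orbitGram (autSet H) w x y := by
  obtain ⟨σ, hσ⟩ := het huv hxy
  rw [← orbitGram_autSet_apply_iso w σ]
  rcases Sym2.eq_iff.mp hσ with ⟨hu, hv⟩ | ⟨hu, hv⟩
  · rw [hu, hv]
  · rw [hu, hv, orbitGram_apply_comm]

theorem orbitGram_autSet_apply_le (hvt : IsVertexTransitive H) (u v x : W) :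
    orbitGram (autSet H) w u v ≤ orbitGram (autSet H) w x x := by
  refine (le_abs_self _).trans (abs_le_of_sq_le_sq ?_ (orbitGram_apply_self_nonneg _ w x))
  calc orbitGram (autSet H) w u v ^ 2
      ≤ orbitGram (autSet H) w u u * orbitGram (autSet H) w v v := orbitGram_apply_sq_le _ w u v
    _ = orbitGram (autSet H) w x x ^ 2 := by
      rw [orbitGram_autSet_apply_self_eq w hvt u x, orbitGram_autSet_apply_self_eq w hvt v x, sq]

theorem card_mul_orbitGram_autSet_apply_self (hvt : IsVertexTransitive H) (u : W) :
    Fintype.card W * orbitGram (autSet H) w u u = #(autSet H) * (w ⬝ᵥ w) := by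
  rw [← trace_orbitGram, trace]
  simp [Matrix.diag, orbitGram_autSet_apply_self_eq w hvt _ u]

theorem sum_adjMatrix_mul_orbitGram_autSet_apply (het : IsEdgeTransitive H) {u₀ v₀ : W}
    (h₀ : H.Adj u₀ v₀) :
    (∑ u, ∑ v, H.adjMatrix ℝ u v) * orbitGram (autSet H) w u₀ v₀ =
      #(autSet H) * (w ⬝ᵥ H.adjMatrix ℝ *ᵥ w) := by
  rw [← sum_mul_orbitGram_of_invariant _ w _ fun _ ↦ adjMatrix_submatrix_of_mem_autSet, sum_mul]
  refine sum_congr rfl fun u _ ↦ ?_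
  rw [sum_mul]
  refine sum_congr rfl fun v _ ↦ ?_
  by_cases h : H.Adj u v
  · rw [orbitGram_autSet_apply_eq_of_adj w het h h₀]
  · simp [h]

end Automorphisms

section Blocks

variable {VG W : Type*} [Fintype VG] [DecidableEq W]

def blockSqNorm (P : VG → W) (X : Matrix VG VG ℝ) : Matrix W W ℝ :=
  of fun u v ↦ ∑ a, ∑ b, if P a = u ∧ P b = v then X a b ^ 2 else 0

variable (P : VG → W) {X : Matrix VG VG ℝ}

theorem blockSqNorm_apply_nonneg (u v : W) : 0 ≤ blockSqNorm P X u v :=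
  sum_nonneg fun _ _ ↦ sum_nonneg fun _ _ ↦ by split_ifs <;> positivity

variable [Fintype W]

theorem sum_blockSqNorm : ∑ u, ∑ v, blockSqNorm P X u v = ∑ a, ∑ b, X a b ^ 2 := by
  simp only [blockSqNorm, of_apply]
  simp_rw [sum_comm (s := (univ : Finset W)) (t := (univ : Finset VG))]
  simp [ite_and]

theorem posSemidef_blockSqNorm (hX : X.PosSemidef) : (blockSqNorm P X).PosSemidef := by
  set B : Matrix VG W ℝ := of fun a u ↦ if P a = u then 1 else 0
  have hB : blockSqNorm P X = Bᴴ * (X ⊙ X) * B := by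
    ext u v
    simp only [B, blockSqNorm, mul_apply, hadamard_apply, conjTranspose_apply, of_apply, sum_mul]
    rw [sum_comm]
    refine sum_congr rfl fun a _ ↦ sum_congr rfl fun b _ ↦ ?_
    split_ifs <;> simp_all [sq]
  rw [hB]
  exact (hX.hadamard hX).conjTranspose_mul_mul_same B

end Blocks

section Weighting

variable {W : Type*} [Fintype W] {H : SimpleGraph W} [DecidableRel H.Adj]

theorem sum_mul_le_of_adj_eq_of_le {Q E : Matrix W W ℝ} {α β : ℝ} (hQ : ∀ u v, 0 ≤ Q u v)
    (hadj : ∀ u v, H.Adj u v → E u v = β) (hle : ∀ u v, E u v ≤ α) :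
    ∑ u, ∑ v, Q u v * E u v ≤
      β * ∑ u, ∑ v, (if H.Adj u v then Q u v else 0) +
        α * ∑ u, ∑ v, (if H.Adj u v then 0 else Q u v) := by
  simp only [mul_sum, ← sum_add_distrib]
  refine sum_le_sum fun u _ ↦ sum_le_sum fun v _ ↦ ?_
  by_cases h : H.Adj u v
  · simp [h, hadj u v h, mul_comm]
  · simpa [h, mul_comm] using mul_le_mul_of_nonneg_left (hle u v) (hQ u v)

variable [DecidableEq W]

theorem abs_lamMin_mul_sum_adj_le (hvt : IsVertexTransitive H) (het : IsEdgeTransitive H)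
    {u₀ v₀ : W} (h₀ : H.Adj u₀ v₀) {Q : Matrix W W ℝ} (hQ : Q.PosSemidef)
    (hQ₀ : ∀ u v, 0 ≤ Q u v) :
    |lamMin H| * ∑ u, ∑ v, (if H.Adj u v then Q u v else 0) ≤
      lamMax H * ∑ u, ∑ v, (if H.Adj u v then 0 else Q u v) := by
  have : Nonempty W := ⟨u₀⟩
  obtain ⟨w, hw, hwA : w ⬝ᵥ H.adjMatrix ℝ *ᵥ w = lamMin H⟩ :=
    (adjMatrix_isHermitian H).exists_dotProduct_mulVec_eq_iInf_eigenvalues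
  set α := orbitGram (autSet H) w u₀ u₀
  set β := orbitGram (autSet H) w u₀ v₀
  set Qe := ∑ u, ∑ v, (if H.Adj u v then Q u v else 0)
  set Qn := ∑ u, ∑ v, (if H.Adj u v then 0 else Q u v)
  set m := ∑ u, ∑ v, H.adjMatrix ℝ u v
  set n : ℝ := (Fintype.card W : ℝ)
  set N : ℝ := (#(autSet H) : ℝ)
  have hN : 0 < N := Nat.cast_pos.mpr (card_pos.mpr ⟨1, one_mem_autSet⟩)
  have hn : 0 < n := Nat.cast_pos.mpr Fintype.card_pos
  have hm : 0 ≤ m := sum_nonneg fun _ _ ↦ sum_nonneg fun _ _ ↦ by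
    rw [SimpleGraph.adjMatrix_apply]; split_ifs <;> norm_num
  have hQn : 0 ≤ Qn := sum_nonneg fun u _ ↦ sum_nonneg fun v _ ↦ by split_ifs <;> simp [hQ₀]
  have hdiag : n * α = N := by
    rw [card_mul_orbitGram_autSet_apply_self w hvt u₀, hw, mul_one]
  have hadj : m * β = N * lamMin H := by
    rw [sum_adjMatrix_mul_orbitGram_autSet_apply w het h₀, hwA]
  have hpos : 0 ≤ β * Qe + α * Qn :=
    (sum_mul_orbitGram_nonneg _ w hQ).trans <| sum_mul_le_of_adj_eq_of_le hQ₀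
      (fun _ _ h ↦ orbitGram_autSet_apply_eq_of_adj w het h h₀)
      fun u v ↦ orbitGram_autSet_apply_le w hvt u v u₀
  have h₁ : 0 ≤ n * lamMin H * Qe + m * Qn := by
    refine nonneg_of_mul_nonneg_right ?_ hN
    calc 0 ≤ m * n * (β * Qe + α * Qn) := by positivity
      _ = N * (n * lamMin H * Qe + m * Qn) := by
        linear_combination (n * Qe) * hadj + (m * Qn) * hdiag
  have hmax : m * Qn ≤ lamMax H * n * Qn :=
    mul_le_mul_of_nonneg_right (sum_adjMatrix_le_lamMax_mul_card H) hQn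
  have h₂ : 0 ≤ n * (lamMin H * Qe + lamMax H * Qn) := by linarith
  rw [abs_of_neg (by linarith [lamMin_le_neg_one H h₀])]
  linarith [nonneg_of_mul_nonneg_right h₂ hn]

end Weighting

end SpectralFrac

theorem SpectralFrac.frobenius_le_nonedge_blocks_general {VG W : Type*} [Fintype VG]
    [Fintype W] [DecidableEq W]
    (H : SimpleGraph W) [DecidableRel H.Adj]
    (hHe : H.edgeSet.Nonempty) (hvt : IsVertexTransitive H) (het : IsEdgeTransitive H)
    (P : VG → W) (X : Matrix VG VG ℝ) (hX : X.PosSemidef) :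
    ∑ a, ∑ b, (X a b) ^ 2 ≤
      (1 + lamMax H / |lamMin H|) *
        ∑ u, ∑ v, if H.Adj u v then 0
          else ∑ a, ∑ b, if P a = u ∧ P b = v then (X a b) ^ 2 else 0 := by
  obtain ⟨⟨u₀, v₀⟩, h₀ : H.Adj u₀ v₀⟩ := hHe
  have key := abs_lamMin_mul_sum_adj_le hvt het h₀ (posSemidef_blockSqNorm P hX)
    (blockSqNorm_apply_nonneg P)
  have hlam : 0 < |lamMin H| := abs_pos_of_neg (by linarith [lamMin_le_neg_one H h₀])
  rw [← sum_blockSqNorm P]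
  show _ ≤ _ * ∑ u, ∑ v, if H.Adj u v then 0 else blockSqNorm P X u v
  calc ∑ u, ∑ v, blockSqNorm P X u v
      = ∑ u, ∑ v, (if H.Adj u v then blockSqNorm P X u v else 0) +
          ∑ u, ∑ v, (if H.Adj u v then 0 else blockSqNorm P X u v) := by
        simp only [← sum_add_distrib, ite_add_ite, add_zero, zero_add, ite_self]
    _ ≤ _ := by
      rw [add_mul, one_mul, add_comm, div_mul_eq_mul_div, add_le_add_iff_left, le_div_iff₀ hlam]
      linarith

/-- **Lemma (main lemma).** If `H` is vertex- and edge-transitive with at least one edge, `G` has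
an `H`-partition (given by `P : V(G) → V(H)`, with `V_u = P⁻¹(u)`), and `X` is a real symmetric
PSD matrix indexed by `V(G)`, then
`‖X‖² ≤ (1 + λ_max(H)/|λ_min(H)|) · Σ_{(u,v) : {u,v} ∉ E(H)} ‖X_[u,v]‖²`. -/
theorem SpectralFrac.frobenius_le_nonedge_blocks {VG W : Type*} [Fintype VG]
    [Fintype W] [DecidableEq W]
    (H : SimpleGraph W) [DecidableRel H.Adj] (G : SimpleGraph VG)
    (hHe : H.edgeSet.Nonempty) (hvt : IsVertexTransitive H) (het : IsEdgeTransitive H)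
    (P : VG → W) (X : Matrix VG VG ℝ) (hX : X.PosSemidef) :
    ∑ a, ∑ b, (X a b) ^ 2 ≤
      (1 + lamMax H / |lamMin H|) *
        ∑ u, ∑ v, if H.Adj u v then 0
          else ∑ a, ∑ b, if P a = u ∧ P b = v then (X a b) ^ 2 else 0 :=
  SpectralFrac.frobenius_le_nonedge_blocks_general H hHe hvt het P X hX
end

section
/- Let G be a finite simple graph equipped with an H-partition ⨆_{u ∈ V(H)} V_u for some finite simple graph H, and let X be a real symmetric positive semidefinite matrix with rows and columns indexed by V(G). Then the matrix Z with rows and columns indexed by V(H) defined by Z_{u,v} = ‖X_[u,v]‖² (the sum of the squares of the entries of the block X_[u,v]) is entrywise nonnegative and positive semidefinite. -/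
open Matrix Finset

/-!
With `B` the `0/1` matrix whose column `u` is the indicator vector of the part `V_u`, the block
matrix is the congruence `Z = Bᵀ (X ⊙ X) B`. The Hadamard square `X ⊙ X` is positive semidefinite
by the Schur product theorem, and congruence preserves positive semidefiniteness.
-/

namespace Matrix

variable {m n : Type*}

def partitionMatrix (R : Type*) [DecidableEq n] [Zero R] [One R] (P : m → n) : Matrix m n R :=
  of fun a u => if P a = u then 1 else 0

theorem partitionMatrix_transpose_mul_mul_apply {R : Type*} [Fintype m] [DecidableEq n]
    [NonAssocSemiring R] (P : m → n) (M : Matrix m m R) (u v : n) :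
    ((partitionMatrix R P)ᵀ * M * partitionMatrix R P) u v =
      ∑ a, ∑ b, if P a = u ∧ P b = v then M a b else 0 := by
  simp only [mul_apply, transpose_apply, partitionMatrix, of_apply, ite_mul, one_mul, zero_mul,
    mul_ite, mul_one, mul_zero, ite_and, sum_ite_irrel, sum_const_zero, ← sum_filter]
  exact sum_comm

end Matrix

theorem SpectralFrac.blockNormSq_nonneg_posSemidef_general {VG W : Type*} [Fintype VG]
    [Fintype W] [DecidableEq W]
    (P : VG → W)
    (X : Matrix VG VG ℝ) (hX : X.PosSemidef) (Z : Matrix W W ℝ)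
    (hZ : ∀ u v, Z u v = ∑ a, ∑ b, if P a = u ∧ P b = v then (X a b) ^ 2 else 0) :
    (∀ u v, 0 ≤ Z u v) ∧ Z.PosSemidef := by
  have hZ_eq : Z = (partitionMatrix ℝ P)ᴴ * (X ⊙ X) * partitionMatrix ℝ P := by
    ext u v
    rw [hZ, conjTranspose_eq_transpose_of_trivial, partitionMatrix_transpose_mul_mul_apply]
    simp only [hadamard_apply, sq]
  refine ⟨fun u v => ?_, ?_⟩
  · rw [hZ]
    positivity
  · rw [hZ_eq]
    exact (hX.hadamard hX).conjTranspose_mul_mul_same _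

/-- **Claim.** Given an `H`-partition of `G` (via `P : V(G) → V(H)`) and a real symmetric PSD
matrix `X` indexed by `V(G)`, the matrix `Z` with `Z_{u,v} = ‖X_[u,v]‖²` is entrywise nonnegative
and PSD. -/
theorem SpectralFrac.blockNormSq_nonneg_posSemidef {VG W : Type*} [Fintype VG]
    [Fintype W] [DecidableEq W]
    (H : SimpleGraph W) (G : SimpleGraph VG) (P : VG → W)
    (X : Matrix VG VG ℝ) (hX : X.PosSemidef) (Z : Matrix W W ℝ)
    (hZ : ∀ u v, Z u v = ∑ a, ∑ b, if P a = u ∧ P b = v then (X a b) ^ 2 else 0) :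
    (∀ u v, 0 ≤ Z u v) ∧ Z.PosSemidef :=
  SpectralFrac.blockNormSq_nonneg_posSemidef_general P X hX Z hZ
end
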